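/- For all n ≥ 8 there exists a compact set X ⊆ ℝ^n, the union of two line segments sharing an endpoint, with ‖X‖_∞ = 1, such that its unique lexicographic maximum is x* = (0,...,0,1), yet for every c ≥ 2, any exact minimizer x_{c,0} of the exponential loss L_c over X satisfies σ_n(x*) − σ_n(x_{c,0}) ≥ 1/2. -/

import Mathlib

noncomputable def sortedComp {n : ℕ} (x : Fin n → ℝ) (k : Fin n) : ℝ :=
  x (Tuple.sort x k)

def IsLexMax {n : ℕ} (X : Set (Fin n → ℝ)) (y : Fin n → ℝ) : Prop :=
  y ∈ X ∧ ∀ x ∈ X, x = y ∨ ∃ i : Fin n,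
    (∀ j : Fin n, j < i → sortedComp y j = sortedComp x j) ∧
    sortedComp x i < sortedComp y i

/-- The exponential loss. -/
noncomputable def expLoss {n : ℕ} (c : ℝ) (x : Fin n → ℝ) : ℝ :=
  ∑ i, Real.exp (-c * x i)

/-- The sup of the sup-norms of elements of X, i.e. ‖X‖_∞. -/
noncomputable def supNorm {n : ℕ} (X : Set (Fin n → ℝ)) : ℝ :=
  sSup ((fun x : Fin n → ℝ => ‖x‖) '' X)

/-!
The set is the piece `[1/2, 1] • e_n` of the ray towards the lexicographic maximum `e_n`,
followed by the bent leg `b ↦ (-b/2, b/4, …, b/4, 1/2)`, `b ∈ [0, 1]`, on which no coordinate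
exceeds `1/2`. Every point `t • e_n` has `n - 1` zero coordinates, so its exponential loss exceeds
`n - 1`. On the bent leg at `b = 2/c` the negative coordinate costs only `e`, while each of the
`n - 2` middle coordinates costs `e^{-1/2}`; for `n ≥ 8` the total is below `n - 1`. Hence every
minimizer lies on the bent leg.
-/

open Set Real

theorem sum_eq_add_add_mul_of_eq_off_pair {ι R : Type*} [Fintype ι] [DecidableEq ι] [CommRing R]
    {f : ι → R} {a b : ι} (hab : a ≠ b) {C : R} (hf : ∀ i, i ≠ a → i ≠ b → f i = C) :
    ∑ i, f i = f a + f b + ((Fintype.card ι : R) - 2) * C := by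
  have h := Fintype.sum_eq_add (f := fun i => f i - C) a b hab fun i hi =>
    sub_eq_zero.2 (hf i hi.1 hi.2)
  simp only [Finset.sum_sub_distrib, Finset.sum_const, Finset.card_univ, nsmul_eq_mul] at h
  linear_combination h

theorem isCompact_segment {E : Type*} [AddCommGroup E] [Module ℝ E] [TopologicalSpace E]
    [IsTopologicalAddGroup E] [ContinuousSMul ℝ E] (x y : E) : IsCompact (segment ℝ x y) := by
  rw [← convexHull_pair]
  exact (toFinite _).isCompact_convexHull ℝ

variable {n : ℕ}

theorem sortedComp_symm_apply (x : Fin n → ℝ) (i : Fin n) :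
    sortedComp x ((Tuple.sort x).symm i) = x i := by
  simp [sortedComp]

theorem monotone_sortedComp (x : Fin n → ℝ) : Monotone (sortedComp x) :=
  Tuple.monotone_sort x

theorem sortedComp_zero_le (h : 0 < n) (x : Fin n → ℝ) (i : Fin n) :
    sortedComp x ⟨0, h⟩ ≤ x i :=
  sortedComp_symm_apply x i ▸ monotone_sortedComp x (Fin.le_def.2 (Nat.zero_le _))

theorem sortedComp_last_le_iff (h : n - 1 < n) (x : Fin n → ℝ) (a : ℝ) :
    sortedComp x ⟨n - 1, h⟩ ≤ a ↔ ∀ i, x i ≤ a := by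
  refine ⟨fun ha i => ?_, fun ha => ha _⟩
  rw [← sortedComp_symm_apply x i]
  exact (monotone_sortedComp x (Fin.le_def.2 (Nat.le_sub_one_of_lt (Fin.is_lt _)))).trans ha

theorem sortedComp_eq_self_of_monotone {x : Fin n → ℝ} (hx : Monotone x) :
    sortedComp x = x := by
  funext k
  simp [sortedComp, Tuple.sort_eq_refl_iff_monotone.2 hx]

theorem isLexMax_iff {X : Set (Fin n → ℝ)} {y : Fin n → ℝ} :
    IsLexMax X y ↔
      y ∈ X ∧ ∀ x ∈ X, x = y ∨ toLex (sortedComp x) < toLex (sortedComp y) := by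
  simp only [IsLexMax, eq_comm (a := sortedComp y _)]
  rfl

theorem IsLexMax.unique {X : Set (Fin n → ℝ)} {y z : Fin n → ℝ} (hy : IsLexMax X y)
    (hz : IsLexMax X z) : y = z := by
  rw [isLexMax_iff] at hy hz
  rcases hz.2 y hy.1 with h | h
  · exact h
  rcases hy.2 z hz.1 with h' | h'
  · exact h'.symm
  exact (lt_asymm h h').elim

noncomputable def lastSingle (n : ℕ) (t : ℝ) : Fin n → ℝ :=
  fun i => if i.val = n - 1 then t else 0

noncomputable def secondLeg (n : ℕ) (b : ℝ) : Fin n → ℝ :=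
  fun i => if i.val = n - 1 then 1 / 2 else if i.val = 0 then -b / 2 else b / 4

def unstableSet (n : ℕ) : Set (Fin n → ℝ) :=
  segment ℝ (lastSingle n 1) (lastSingle n (1 / 2)) ∪
    segment ℝ (lastSingle n (1 / 2)) (secondLeg n 1)

theorem lastSingle_eq_smul (t : ℝ) : lastSingle n t = t • lastSingle n 1 := by
  ext i
  simp [lastSingle]

theorem monotone_lastSingle : Monotone (lastSingle n) := fun s t hst i => by
  simp only [lastSingle]
  split_ifs <;> simp [hst]

theorem strictMono_lastSingle (hn : 0 < n) : StrictMono (lastSingle n) :=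
  monotone_lastSingle.strictMono_of_injective fun s t hst => by
    simpa [lastSingle] using congr_fun hst ⟨n - 1, by omega⟩

theorem monotone_lastSingle_apply {t : ℝ} (ht : 0 ≤ t) : Monotone (lastSingle n t) :=
  fun i j hij => by
    simp only [lastSingle]
    split_ifs <;> first | exact le_rfl | exact ht | omega

theorem sortedComp_lastSingle {t : ℝ} (ht : 0 ≤ t) :
    sortedComp (lastSingle n t) = lastSingle n t :=
  sortedComp_eq_self_of_monotone (monotone_lastSingle_apply ht)

theorem norm_lastSingle (hn : 0 < n) (t : ℝ) : ‖lastSingle n t‖ = |t| := by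
  refine le_antisymm ((pi_norm_le_iff_of_nonneg (abs_nonneg t)).2 fun i => ?_) ?_
  · simp only [lastSingle]
    split_ifs <;> simp
  · simpa [lastSingle] using norm_le_pi_norm (lastSingle n t) ⟨n - 1, by omega⟩

theorem norm_secondLeg_le_one {b : ℝ} (hb0 : 0 ≤ b) (hb1 : b ≤ 1) : ‖secondLeg n b‖ ≤ 1 := by
  refine (pi_norm_le_iff_of_nonneg zero_le_one).2 fun i => ?_
  simp only [secondLeg, Real.norm_eq_abs, abs_le]
  split_ifs <;> constructor <;> linarith

theorem secondLeg_eq_lineMap :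
    secondLeg n = AffineMap.lineMap (lastSingle n (1 / 2)) (secondLeg n 1) := by
  ext b i
  simp only [AffineMap.lineMap_apply_module, Pi.add_apply, Pi.smul_apply, smul_eq_mul,
    secondLeg, lastSingle]
  split_ifs <;> ring

theorem segment_lastSingle (s t : ℝ) :
    segment ℝ (lastSingle n s) (lastSingle n t) = lastSingle n '' segment ℝ s t := by
  have hf : ⇑(LinearMap.id.smulRight (lastSingle n 1) : ℝ →ₗ[ℝ] Fin n → ℝ) = lastSingle n :=
    funext fun t => (lastSingle_eq_smul t).symm
  simpa [hf] using
    (image_segment ℝ (LinearMap.id.smulRight (lastSingle n 1)).toAffineMap s t).symm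

theorem unstableSet_eq :
    unstableSet n = lastSingle n '' Icc (1 / 2) 1 ∪ secondLeg n '' Icc 0 1 := by
  rw [unstableSet, segment_lastSingle, segment_symm, segment_eq_Icc (by norm_num),
    segment_eq_image_lineMap, ← secondLeg_eq_lineMap]

theorem isCompact_unstableSet : IsCompact (unstableSet n) :=
  (isCompact_segment _ _).union (isCompact_segment _ _)

theorem supNorm_unstableSet (hn : 0 < n) : supNorm (unstableSet n) = 1 := by
  refine IsGreatest.csSup_eq ⟨⟨lastSingle n 1, Or.inl (left_mem_segment ℝ _ _), ?_⟩, ?_⟩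
  · simp [norm_lastSingle hn]
  rw [unstableSet_eq, image_union, image_image, image_image]
  rintro _ (⟨t, ⟨ht, ht1⟩, rfl⟩ | ⟨b, ⟨hb0, hb1⟩, rfl⟩)
  · simp only [norm_lastSingle hn, abs_le]
    constructor <;> linarith
  · exact norm_secondLeg_le_one hb0 hb1

theorem secondLeg_zero : secondLeg n 0 = lastSingle n (1 / 2) := by
  ext i
  simp only [secondLeg, lastSingle]
  split_ifs <;> norm_num

theorem isLexMax_unstableSet (hn : 2 ≤ n) : IsLexMax (unstableSet n) (lastSingle n 1) := by
  have hray : ∀ t ∈ Icc (1 / 2 : ℝ) 1, lastSingle n t = lastSingle n 1 ∨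
      toLex (sortedComp (lastSingle n t)) < toLex (sortedComp (lastSingle n 1)) := by
    rintro t ⟨ht, ht1⟩
    rw [sortedComp_lastSingle (by linarith), sortedComp_lastSingle zero_le_one]
    rcases ht1.eq_or_lt with rfl | ht1
    · exact Or.inl rfl
    · exact Or.inr (Pi.toLex_strictMono (strictMono_lastSingle (by omega) ht1))
  rw [isLexMax_iff, unstableSet_eq]
  refine ⟨Or.inl ⟨1, by norm_num, rfl⟩, ?_⟩
  rintro _ (⟨t, ht, rfl⟩ | ⟨b, ⟨hb0, -⟩, rfl⟩)
  · exact hray t ht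
  rcases hb0.eq_or_lt with rfl | hb
  · exact secondLeg_zero (n := n) ▸ hray (1 / 2) ⟨le_rfl, by norm_num⟩
  refine Or.inr ⟨⟨0, by omega⟩, fun j hj => (Nat.not_lt_zero _ (Fin.lt_def.1 hj)).elim, ?_⟩
  calc sortedComp (secondLeg n b) ⟨0, by omega⟩ ≤ secondLeg n b ⟨0, by omega⟩ :=
        sortedComp_zero_le _ _ _
    _ = -b / 2 := by simp [secondLeg]; omega
    _ < 0 := by linarith
    _ = sortedComp (lastSingle n 1) ⟨0, by omega⟩ := by
        rw [sortedComp_lastSingle zero_le_one]; simp [lastSingle]; omega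

theorem expLoss_lastSingle (hn : 2 ≤ n) (c t : ℝ) :
    expLoss c (lastSingle n t) = n - 1 + exp (-c * t) := by
  have hne : (⟨0, by omega⟩ : Fin n) ≠ ⟨n - 1, by omega⟩ := by simp [Fin.ext_iff]; omega
  rw [expLoss, sum_eq_add_add_mul_of_eq_off_pair hne (C := 1) fun i _ hi => by
    simp [lastSingle, Fin.ext_iff.not.1 hi]]
  simp [lastSingle, show 0 ≠ n - 1 by omega]
  ring

theorem expLoss_secondLeg (hn : 2 ≤ n) (c b : ℝ) :
    expLoss c (secondLeg n b) =
      exp (c * b / 2) + exp (-c / 2) + (n - 2) * exp (-(c * b / 4)) := by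
  have hne : (⟨0, by omega⟩ : Fin n) ≠ ⟨n - 1, by omega⟩ := by simp [Fin.ext_iff]; omega
  rw [expLoss, sum_eq_add_add_mul_of_eq_off_pair hne (C := exp (-(c * b / 4)))
    fun i hi0 hi => by simp [secondLeg, Fin.ext_iff.not.1 hi, Fin.ext_iff.not.1 hi0, mul_div_assoc]]
  simp [secondLeg, show 0 ≠ n - 1 by omega]
  ring_nf

theorem exp_one_add_exp_neg_one_add_mul_exp_neg_half_lt {m : ℝ} (hm : 8 ≤ m) :
    exp 1 + exp (-1) + (m - 2) * exp (-(1 / 2)) < m - 1 := by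
  have he := exp_one_lt_d9
  have hinv : exp (-1) * exp 1 = 1 := by rw [← exp_add]; norm_num
  have hsq : exp (-(1 / 2)) * exp (-(1 / 2)) = exp (-1) := by rw [← exp_add]; norm_num
  have h1 : exp (-1) < 0.36788 := by nlinarith [exp_one_gt_d9, exp_pos (-1)]
  have h2 : exp (-(1 / 2)) < 0.6066 := by nlinarith [exp_pos (-(1 / 2))]
  nlinarith

theorem expLoss_secondLeg_lt (hn : 8 ≤ n) {c : ℝ} (hc : 2 ≤ c) :
    expLoss c (secondLeg n (2 / c)) < n - 1 := by
  have hc0 : c ≠ 0 := by positivity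
  have hcb : c * (2 / c) = 2 := by field_simp
  have hhalf : exp (-c / 2) ≤ exp (-1) := exp_le_exp.2 (by linarith)
  rw [expLoss_secondLeg (by omega), hcb, div_self two_ne_zero, show (2 : ℝ) / 4 = 1 / 2 by norm_num]
  linarith [exp_one_add_exp_neg_one_add_mul_exp_neg_half_lt (m := n) (by exact_mod_cast hn)]

theorem apply_le_half_of_expLoss_minimizer (hn : 8 ≤ n) {c : ℝ} (hc : 2 ≤ c)
    {xc : Fin n → ℝ} (hxc : xc ∈ unstableSet n)
    (hmin : ∀ x ∈ unstableSet n, expLoss c xc ≤ expLoss c x) (i : Fin n) : xc i ≤ 1 / 2 := by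
  have hleg : secondLeg n (2 / c) ∈ unstableSet n := by
    rw [unstableSet_eq]
    exact Or.inr ⟨2 / c, ⟨by positivity, (div_le_one (by positivity)).2 hc⟩, rfl⟩
  rw [unstableSet_eq] at hxc
  rcases hxc with ⟨t, -, rfl⟩ | ⟨b, ⟨hb0, hb1⟩, rfl⟩
  · have hcmp := hmin _ hleg
    rw [expLoss_lastSingle (by omega)] at hcmp
    linarith [expLoss_secondLeg_lt hn hc, exp_pos (-c * t)]
  · simp only [secondLeg]
    split_ifs <;> linarith

theorem unstable_set_exp_loss_far {n : ℕ} (hn : 8 ≤ n) :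
    ∃ X : Set (Fin n → ℝ),
      IsCompact X ∧
      (∃ u v w : Fin n → ℝ, X = segment ℝ u v ∪ segment ℝ v w) ∧
      supNorm X = 1 ∧
      IsLexMax X (fun i => if i.val = n - 1 then 1 else 0) ∧
      (∀ y, IsLexMax X y → y = fun i => if i.val = n - 1 then 1 else 0) ∧
      (∀ c : ℝ, 2 ≤ c → ∀ xc ∈ X, (∀ x ∈ X, expLoss c xc ≤ expLoss c x) →
        (1 : ℝ) / 2 ≤
          sortedComp (fun i : Fin n => if i.val = n - 1 then (1 : ℝ) else 0) ⟨n - 1, by omega⟩ -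
          sortedComp xc ⟨n - 1, by omega⟩) := by
  have hlex : IsLexMax (unstableSet n) (lastSingle n 1) := isLexMax_unstableSet (by omega)
  refine ⟨unstableSet n, isCompact_unstableSet, ⟨_, _, _, rfl⟩, supNorm_unstableSet (by omega),
    hlex, fun y hy => hy.unique hlex, fun c hc xc hxc hmin => ?_⟩
  have hstar : sortedComp (lastSingle n 1) ⟨n - 1, by omega⟩ = 1 := by
    simp [sortedComp_lastSingle zero_le_one, lastSingle]
  have hfar : sortedComp xc ⟨n - 1, by omega⟩ ≤ 1 / 2 :=
    (sortedComp_last_le_iff _ xc _).2 (apply_le_half_of_expLoss_minimizer hn hc hxc hmin)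
  change 1 / 2 ≤ sortedComp (lastSingle n 1) _ - _
  linarith
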